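/- (Unconditional per-step stability of the alternative scheme.) Let I = ℝ/ℤ, J ≥ 3, h = 1/J, Δt > 0, and let X^m, X^{m+1} ∈ [V^h]² satisfy ((X^m·e₁)² D_t X^{m+1}, η |X^m_ρ|²) + ((X^m·e₁)² X^{m+1}_ρ, η_ρ) + (X^{m+1}·e₁, η·e₁ |X^{m+1}_ρ|²) = 0 for all η ∈ [V^h]², where D_t X^{m+1} = (X^{m+1} − X^m)/Δt. Then ½ ((X^{m+1}·e₁)², |X^{m+1}_ρ|²) + Δt ((X^m·e₁)² |D_t X^{m+1}|², |X^m_ρ|²) ≤ ½ ((X^m·e₁)², |X^m_ρ|²). -/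

import Mathlib

/- STATEMENT 4: Unconditional per-step stability (eq. (4.6) of the paper) of the
alternative fully discrete scheme `(Q^{h,Δt})` for axisymmetric mean curvature flow
on `I = ℝ/ℤ`. -/

open MeasureTheory Real Set
open scoped RealInnerProductSpace

noncomputable section

abbrev E2 := EuclideanSpace ℝ (Fin 2)

def e1 : E2 := EuclideanSpace.single 0 1

/-- The periodic piecewise affine finite element space `[V^h]²`: continuous 1-periodic
functions that are affine on each subinterval `[j/J, (j+1)/J]` of `[0,1]`. -/
def Vh (J : ℕ) : Set (ℝ → E2) :=
  {f | Continuous f ∧ Function.Periodic f 1 ∧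
    ∀ j : ℕ, j < J → ∃ a b : E2,
      ∀ ρ ∈ Set.Icc ((j : ℝ)/J) (((j : ℝ)+1)/J), f ρ = a + ρ • b}

/-- The scheme form of `(Q^{h,Δt})`: `((X^m·e₁)² D_t X^{m+1}, η |X^m_ρ|²)
+ ((X^m·e₁)² X^{m+1}_ρ, η_ρ) + (X^{m+1}·e₁, η·e₁ |X^{m+1}_ρ|²)`. -/
def Qform (Δt : ℝ) (Xm Xnew η : ℝ → E2) : ℝ :=
  ∫ ρ in (0:ℝ)..1,
    (⟪Xm ρ, e1⟫^2 * ⟪Δt⁻¹ • (Xnew ρ - Xm ρ), η ρ⟫ * ‖deriv Xm ρ‖^2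
      + ⟪Xm ρ, e1⟫^2 * ⟪deriv Xnew ρ, deriv η ρ⟫
      + ⟪Xnew ρ, e1⟫ * ⟪η ρ, e1⟫ * ‖deriv Xnew ρ‖^2)

/-!
Test the scheme with `η = X^{m+1} - X^m`. The time-derivative term then equals
`Δt ((X^m·e₁)² |D_t X^{m+1}|², |X^m_ρ|²)` exactly, and the two remaining terms dominate
`½ ((X^{m+1}·e₁)², |X^{m+1}_ρ|²) - ½ ((X^m·e₁)², |X^m_ρ|²)` pointwise, the difference being
`½ (X^m·e₁)² |X^{m+1}_ρ - X^m_ρ|² + ½ ((X^{m+1} - X^m)·e₁)² |X^{m+1}_ρ|² ≥ 0`.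
-/

open intervalIntegral
open scoped Topology Interval

lemma hasDerivAt_of_eqOn_Icc_affine {E : Type*} [NormedAddCommGroup E] [NormedSpace ℝ E]
    {f : ℝ → E} {p q ρ : ℝ} {a b : E} (hf : ∀ x ∈ Icc p q, f x = a + x • b)
    (hρ : ρ ∈ Ioo p q) : HasDerivAt f b ρ := by
  have hev : f =ᶠ[𝓝 ρ] fun x => a + x • b :=
    Filter.eventuallyEq_of_mem (Ioo_mem_nhds hρ.1 hρ.2) fun x hx =>
      hf x (Ioo_subset_Icc_self hx)
  have h : HasDerivAt (fun x : ℝ => a + x • b) b ρ := by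
    simpa using ((hasDerivAt_id ρ).smul_const b).const_add a
  exact h.congr_of_eventuallyEq hev

lemma intervalIntegrable_of_eqOn_cells {F : Type*} [NormedAddCommGroup F] {J : ℕ} (hJ : 0 < J)
    {g : ℝ → F}
    (hg : ∀ j < J, ∃ c : ℝ → F, Continuous c ∧ EqOn g c (Ioo ((j : ℝ) / J) ((j + 1) / J))) :
    IntervalIntegrable g volume 0 1 := by
  have key := IntervalIntegrable.trans_iterate (f := g) (μ := volume)
    (a := fun k : ℕ => (k : ℝ) / J) (n := J) fun j hj => by
      obtain ⟨c, hc, hgc⟩ := hg j hj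
      have hle : (j : ℝ) / J ≤ ((j + 1 : ℕ) : ℝ) / J := by gcongr; simp
      refine (hc.intervalIntegrable _ _).congr_uIoo ?_
      rw [uIoo_of_le hle]
      push_cast
      exact hgc.symm
  simpa [hJ.ne'] using key

lemma ae_mem_cell {J : ℕ} (hJ : 0 < J) :
    ∀ᵐ ρ, ρ ∈ Ι (0 : ℝ) 1 → ∃ j < J, ρ ∈ Ioo ((j : ℝ) / J) ((j + 1) / J) := by
  have hJR : (0 : ℝ) < J := by exact_mod_cast hJ
  have hknots : ∀ᵐ ρ : ℝ, ρ ∉ range fun k : ℕ => (k : ℝ) / J :=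
    (countable_range _).ae_notMem volume
  filter_upwards [hknots] with ρ hρ hmem
  rw [uIoc_of_le zero_le_one] at hmem
  have hρJ : 0 ≤ ρ * J := by nlinarith [hmem.1]
  have hj_lt : (⌊ρ * J⌋₊ : ℝ) < ρ * J := by
    refine (Nat.floor_le hρJ).lt_of_ne fun h => hρ ⟨⌊ρ * J⌋₊, ?_⟩
    simp only [h]
    field_simp
  refine ⟨⌊ρ * J⌋₊, ?_, ?_, ?_⟩
  · exact_mod_cast hj_lt.trans_le (by nlinarith [hmem.2] : ρ * J ≤ J)
  · rwa [div_lt_iff₀ hJR]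
  · rw [lt_div_iff₀ hJR]
    exact Nat.lt_floor_add_one _

lemma sub_mem_Vh {J : ℕ} {f g : ℝ → E2} (hf : f ∈ Vh J) (hg : g ∈ Vh J) : f - g ∈ Vh J := by
  refine ⟨hf.1.sub hg.1, hf.2.1.sub hg.2.1, fun j hj => ?_⟩
  obtain ⟨a, b, hab⟩ := hf.2.2 j hj
  obtain ⟨c, d, hcd⟩ := hg.2.2 j hj
  refine ⟨a - c, b - d, fun ρ hρ => ?_⟩
  simp only [Pi.sub_apply, hab ρ hρ, hcd ρ hρ, smul_sub]
  abel

lemma exists_hasDerivAt_on_cell_of_mem_Vh {J : ℕ} {f : ℝ → E2} (hf : f ∈ Vh J) {j : ℕ}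
    (hj : j < J) : ∃ b, ∀ ρ ∈ Ioo ((j : ℝ) / J) ((j + 1) / J), HasDerivAt f b ρ := by
  obtain ⟨a, b, hab⟩ := hf.2.2 j hj
  exact ⟨b, fun ρ hρ => hasDerivAt_of_eqOn_Icc_affine hab hρ⟩

lemma ae_deriv_sub_of_mem_Vh {J : ℕ} (hJ : 0 < J) {f g : ℝ → E2} (hf : f ∈ Vh J)
    (hg : g ∈ Vh J) : ∀ᵐ ρ, ρ ∈ Ι (0 : ℝ) 1 → deriv (f - g) ρ = deriv f ρ - deriv g ρ := by
  filter_upwards [ae_mem_cell hJ] with ρ hcell hρ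
  obtain ⟨j, hj, hρj⟩ := hcell hρ
  obtain ⟨b, hb⟩ := exists_hasDerivAt_on_cell_of_mem_Vh hf hj
  obtain ⟨c, hc⟩ := exists_hasDerivAt_on_cell_of_mem_Vh hg hj
  rw [(hb ρ hρj).deriv, (hc ρ hρj).deriv]
  exact ((hb ρ hρj).sub (hc ρ hρj)).deriv

lemma intervalIntegrable_comp_deriv_of_mem_Vh {J : ℕ} (hJ : 0 < J) {f g : ℝ → E2}
    (hf : f ∈ Vh J) (hg : g ∈ Vh J) {Φ : ℝ → E2 → E2 → ℝ}
    (hΦ : ∀ u v, Continuous fun ρ => Φ ρ u v) :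
    IntervalIntegrable (fun ρ => Φ ρ (deriv f ρ) (deriv g ρ)) volume 0 1 := by
  refine intervalIntegrable_of_eqOn_cells hJ fun j hj => ?_
  obtain ⟨u, hu⟩ := exists_hasDerivAt_on_cell_of_mem_Vh hf hj
  obtain ⟨v, hv⟩ := exists_hasDerivAt_on_cell_of_mem_Vh hg hj
  exact ⟨fun ρ => Φ ρ u v, hΦ u v, fun ρ hρ => by simp only [(hu ρ hρ).deriv, (hv ρ hρ).deriv]⟩

section InnerProduct

variable {F : Type*} [NormedAddCommGroup F] [InnerProductSpace ℝ F]

lemma mul_norm_inv_smul_sq (τ : ℝ) (w : F) : τ * ‖τ⁻¹ • w‖ ^ 2 = ⟪τ⁻¹ • w, w⟫ := by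
  rw [norm_smul, real_inner_smul_left, real_inner_self_eq_norm_sq, mul_pow, norm_inv,
    Real.norm_eq_abs, inv_pow, sq_abs]
  rcases eq_or_ne τ 0 with rfl | hτ
  · simp
  · field_simp

lemma half_sq_mul_norm_sq_sub_le (s t : ℝ) (u v : F) :
    1 / 2 * (s ^ 2 * ‖u‖ ^ 2) - 1 / 2 * (t ^ 2 * ‖v‖ ^ 2)
      ≤ t ^ 2 * ⟪u, u - v⟫ + s * (s - t) * ‖u‖ ^ 2 := by
  have hA : 0 ≤ t ^ 2 * ‖u - v‖ ^ 2 := by positivity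
  have hB : 0 ≤ (s - t) ^ 2 * ‖u‖ ^ 2 := by positivity
  rw [norm_sub_sq_real] at hA
  rw [inner_sub_right, real_inner_self_eq_norm_sq]
  nlinarith

end InnerProduct

theorem energy_sub_le_Qform {J : ℕ} (hJ : 0 < J) (Δt : ℝ) {Xm Xnew : ℝ → E2}
    (hXm : Xm ∈ Vh J) (hXnew : Xnew ∈ Vh J) :
    1 / 2 * (∫ ρ in (0 : ℝ)..1, ⟪Xnew ρ, e1⟫ ^ 2 * ‖deriv Xnew ρ‖ ^ 2)
      + Δt * (∫ ρ in (0 : ℝ)..1,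
          ⟪Xm ρ, e1⟫ ^ 2 * ‖Δt⁻¹ • (Xnew ρ - Xm ρ)‖ ^ 2 * ‖deriv Xm ρ‖ ^ 2)
      - 1 / 2 * (∫ ρ in (0 : ℝ)..1, ⟪Xm ρ, e1⟫ ^ 2 * ‖deriv Xm ρ‖ ^ 2)
    ≤ Qform Δt Xm Xnew (Xnew - Xm) := by
  have hcm := hXm.1
  have hcn := hXnew.1
  have hint (Φ : ℝ → E2 → E2 → ℝ) (hΦ : ∀ u v, Continuous fun ρ => Φ ρ u v) :=
    intervalIntegrable_comp_deriv_of_mem_Vh hJ hXm hXnew hΦ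
  have hPn := hint (fun ρ _ v => ⟪Xnew ρ, e1⟫ ^ 2 * ‖v‖ ^ 2) (by fun_prop)
  have hA := hint (fun ρ u _ => ⟪Xm ρ, e1⟫ ^ 2 * ‖Δt⁻¹ • (Xnew ρ - Xm ρ)‖ ^ 2 * ‖u‖ ^ 2)
    (by fun_prop)
  have hPm := hint (fun ρ u _ => ⟪Xm ρ, e1⟫ ^ 2 * ‖u‖ ^ 2) (by fun_prop)
  have hQ := hint (fun ρ u v =>
      ⟪Xm ρ, e1⟫ ^ 2 * ⟪Δt⁻¹ • (Xnew ρ - Xm ρ), Xnew ρ - Xm ρ⟫ * ‖u‖ ^ 2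
      + ⟪Xm ρ, e1⟫ ^ 2 * ⟪v, v - u⟫ + ⟪Xnew ρ, e1⟫ * ⟪Xnew ρ - Xm ρ, e1⟫ * ‖v‖ ^ 2)
    (by fun_prop)
  have hQform : Qform Δt Xm Xnew (Xnew - Xm) = ∫ ρ in (0 : ℝ)..1,
      (⟪Xm ρ, e1⟫ ^ 2 * ⟪Δt⁻¹ • (Xnew ρ - Xm ρ), Xnew ρ - Xm ρ⟫ * ‖deriv Xm ρ‖ ^ 2
        + ⟪Xm ρ, e1⟫ ^ 2 * ⟪deriv Xnew ρ, deriv Xnew ρ - deriv Xm ρ⟫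
        + ⟪Xnew ρ, e1⟫ * ⟪Xnew ρ - Xm ρ, e1⟫ * ‖deriv Xnew ρ‖ ^ 2) := by
    refine integral_congr_ae ?_
    filter_upwards [ae_deriv_sub_of_mem_Vh hJ hXnew hXm] with ρ hderiv hρ
    simp only [Pi.sub_apply, hderiv hρ]
  have hL := ((hPn.const_mul (1 / 2)).add (hA.const_mul Δt)).sub (hPm.const_mul (1 / 2))
  simp only [hQform, ← intervalIntegral.integral_const_mul]
  rw [← integral_add (hPn.const_mul _) (hA.const_mul _),
    ← integral_sub ((hPn.const_mul _).add (hA.const_mul _)) (hPm.const_mul _)]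
  refine integral_mono zero_le_one hL hQ fun ρ => ?_
  have hdiff := half_sq_mul_norm_sq_sub_le ⟪Xnew ρ, e1⟫ ⟪Xm ρ, e1⟫ (deriv Xnew ρ) (deriv Xm ρ)
  have htime := mul_norm_inv_smul_sq Δt (Xnew ρ - Xm ρ)
  rw [inner_sub_left]
  linear_combination hdiff + ⟪Xm ρ, e1⟫ ^ 2 * ‖deriv Xm ρ‖ ^ 2 * htime

theorem per_step_stability_general
    (J : ℕ) (hJ : 3 ≤ J) (Δt : ℝ)
    (Xm Xnew : ℝ → E2) (hXm : Xm ∈ Vh J) (hXnew : Xnew ∈ Vh J)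
    (hscheme : ∀ η ∈ Vh J, Qform Δt Xm Xnew η = 0) :
    (1/2) * (∫ ρ in (0:ℝ)..1, ⟪Xnew ρ, e1⟫^2 * ‖deriv Xnew ρ‖^2)
      + Δt * (∫ ρ in (0:ℝ)..1,
          ⟪Xm ρ, e1⟫^2 * ‖Δt⁻¹ • (Xnew ρ - Xm ρ)‖^2 * ‖deriv Xm ρ‖^2)
    ≤ (1/2) * (∫ ρ in (0:ℝ)..1, ⟪Xm ρ, e1⟫^2 * ‖deriv Xm ρ‖^2) := by
  have h := energy_sub_le_Qform (by omega) Δt hXm hXnew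
  rw [hscheme _ (sub_mem_Vh hXnew hXm)] at h
  linarith

theorem per_step_stability
    (J : ℕ) (hJ : 3 ≤ J) (Δt : ℝ) (hΔt : 0 < Δt)
    (Xm Xnew : ℝ → E2) (hXm : Xm ∈ Vh J) (hXnew : Xnew ∈ Vh J)
    (hscheme : ∀ η ∈ Vh J, Qform Δt Xm Xnew η = 0) :
    (1/2) * (∫ ρ in (0:ℝ)..1, ⟪Xnew ρ, e1⟫^2 * ‖deriv Xnew ρ‖^2)
      + Δt * (∫ ρ in (0:ℝ)..1,
          ⟪Xm ρ, e1⟫^2 * ‖Δt⁻¹ • (Xnew ρ - Xm ρ)‖^2 * ‖deriv Xm ρ‖^2)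
    ≤ (1/2) * (∫ ρ in (0:ℝ)..1, ⟪Xm ρ, e1⟫^2 * ‖deriv Xm ρ‖^2) :=
  per_step_stability_general J hJ Δt Xm Xnew hXm hXnew hscheme
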